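/- For the Lebesgue–Poisson measure $L_\Lambda$ on finite subsets of a bounded box $\Lambda \subset \mathbb{R}^d$ and any measurable $F: \mathcal{X}_\Lambda^3 \to [0,\infty]$, the quantity $\int L_\Lambda(dX) \sum_{\xi \subset X} \int L_{\Lambda|\#\xi}(d\eta)\, F(\xi, \eta, X\setminus\xi)$ is unchanged when the first two arguments of $F$ are exchanged, i.e., it equals $\int L_\Lambda(dX) \sum_{\xi \subset X} \int L_{\Lambda|\#\xi}(d\eta)\, F(\eta, \xi, X\setminus\xi)$. -/

import Mathlib

open MeasureTheory ENNReal
open scoped Classical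

noncomputable section

/-- The set of points of a finite tuple, as a finite subset of `ℝᵈ`. -/
def tupleSet {d n : ℕ} (x : Fin n → EuclideanSpace ℝ (Fin d)) :
    Finset (EuclideanSpace ℝ (Fin d)) := Finset.image x Finset.univ

/-- Integration of a function of finite point configurations in `Λ` against
the Lebesgue–Poisson measure `L_Λ`:
`∫ L_Λ(dX) g(X) = ∑_{n≥0} (1/n!) ∫_{Λⁿ} g({x₁,…,xₙ}) dx₁⋯dxₙ`. -/
def lpInt {d : ℕ} (Λ : Set (EuclideanSpace ℝ (Fin d)))
    (g : Finset (EuclideanSpace ℝ (Fin d)) → ℝ≥0∞) : ℝ≥0∞ :=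
  ∑' n : ℕ, ((n.factorial : ℝ≥0∞))⁻¹ *
    ∫⁻ x in Set.univ.pi (fun _ : Fin n => Λ), g (tupleSet x)
      ∂(Measure.pi fun _ : Fin n => (volume : Measure (EuclideanSpace ℝ (Fin d))))

/-- Integration against `L_{Λ|N}`, the distribution of `N` independent points
thrown uniformly into `Λ`:
`∫ L_{Λ|N}(dη) g(η) = |Λ|^{-N} ∫_{Λᴺ} g({x₁,…,x_N}) dx₁⋯dx_N`. -/
def lpCond {d : ℕ} (Λ : Set (EuclideanSpace ℝ (Fin d))) (N : ℕ)
    (g : Finset (EuclideanSpace ℝ (Fin d)) → ℝ≥0∞) : ℝ≥0∞ :=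
  (volume Λ ^ N)⁻¹ *
    ∫⁻ x in Set.univ.pi (fun _ : Fin N => Λ), g (tupleSet x)
      ∂(Measure.pi fun _ : Fin N => (volume : Measure (EuclideanSpace ℝ (Fin d))))

/-!
Almost every tuple `x ∈ Λⁿ` has pairwise distinct points, so the subsets `ξ` of
`X = {x₁, …, xₙ}` are the images `x(J)` of the index sets `J ⊆ {1, …, n}`, and the left-hand side
becomes `∑_J |Λ|^{-|J|} ∫∫ F(x(J), η, x(Jᶜ)) dx dη` with `η ∈ Λ^{|J|}`. For each `J`, exchanging
the block `x_J` with `η` preserves the product measure and exchanges the first two arguments of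
`F`. When `d = 0` the space is a single point, every `η` in the inner integral equals `ξ`, and
both sides agree termwise.
-/

open Finset Function

section Finsets

variable {α : Type*} [DecidableEq α]

theorem Finset.univ_image_comp_equiv {ι κ : Type*} [Fintype ι] [Fintype κ] (x : ι → α)
    (e : κ ≃ ι) : univ.image (x ∘ e) = univ.image x := by
  rw [← image_image, image_univ_equiv]

theorem Finset.image_eq_univ_image_subtype {ι : Type*} {s : Finset ι} {p : ι → Prop}
    [Fintype (Subtype p)] (hs : ∀ i, i ∈ s ↔ p i) (x : ι → α) :
    s.image x = univ.image fun i : Subtype p => x i := by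
  ext; simp [hs]

theorem Finset.univ_image_eq_of_subsingleton [Subsingleton α] (s : Finset α)
    (y : Fin s.card → α) : univ.image y = s := by
  ext b
  simp only [mem_image, mem_univ, true_and]
  constructor
  · rintro ⟨i, rfl⟩
    obtain ⟨a, ha⟩ := card_pos.1 i.pos
    rwa [Subsingleton.elim (y i) a]
  · exact fun hb => ⟨⟨0, card_pos.2 ⟨b, hb⟩⟩, Subsingleton.elim _ _⟩

theorem Finset.sum_powerset_univ_image {M ι : Type*} [AddCommMonoid M] [Fintype ι]
    [DecidableEq ι] {x : ι → α} (hx : Injective x) (G : Finset α → Finset α → M) :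
    ∑ ξ ∈ (univ.image x).powerset, G ξ (univ.image x \ ξ) =
      ∑ J ∈ univ.powerset, G (J.image x) (Jᶜ.image x) := by
  rw [powerset_image, sum_image fun J _ K _ h => image_injective hx h]
  refine sum_congr rfl fun J _ => ?_
  rw [← image_sdiff _ _ hx, compl_eq_univ_sdiff]

end Finsets

section Configurations

variable {α : Type*} [MeasurableSpace α] [DecidableEq α]

def ConfigMeasurable (F : Finset α → Finset α → Finset α → ℝ≥0∞) : Prop :=
  ∀ n m k : ℕ, Measurable fun p : (Fin n → α) × (Fin m → α) × (Fin k → α) =>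
    F (univ.image p.1) (univ.image p.2.1) (univ.image p.2.2)

namespace ConfigMeasurable

variable {F : Finset α → Finset α → Finset α → ℝ≥0∞}

theorem swap (hF : ConfigMeasurable F) : ConfigMeasurable fun ξ η ζ => F η ξ ζ := fun n m k =>
  (hF m n k).comp (f := fun p : (Fin n → α) × (Fin m → α) × (Fin k → α) => (p.2.1, p.1, p.2.2))
    (by fun_prop)

theorem measurable_of_fintype (hF : ConfigMeasurable F) (ι κ ν : Type*) [Fintype ι] [Fintype κ]
    [Fintype ν] : Measurable fun p : (ι → α) × (κ → α) × (ν → α) =>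
      F (univ.image p.1) (univ.image p.2.1) (univ.image p.2.2) := by
  let e₁ := (Fintype.equivFin ι).symm
  let e₂ := (Fintype.equivFin κ).symm
  let e₃ := (Fintype.equivFin ν).symm
  convert (hF _ _ _).comp (f := fun p : (ι → α) × (κ → α) × (ν → α) =>
    (p.1 ∘ e₁, p.2.1 ∘ e₂, p.2.2 ∘ e₃)) (by fun_prop) using 1
  ext p
  simp only [comp_apply, univ_image_comp_equiv]

theorem measurable_image_compl (hF : ConfigMeasurable F) {ι : Type*} [Fintype ι] [DecidableEq ι]
    (J : Finset ι) (κ : Type*) [Fintype κ] :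
    Measurable fun p : (ι → α) × (κ → α) => F (J.image p.1) (univ.image p.2) (Jᶜ.image p.1) := by
  convert (hF.measurable_of_fintype {i // i ∈ J} κ {i // i ∉ J}).comp
    (f := fun p : (ι → α) × (κ → α) => (fun i : {i // i ∈ J} => p.1 i, p.2,
      fun i : {i // i ∉ J} => p.1 i)) (by fun_prop) using 1
  ext p
  rw [image_eq_univ_image_subtype (fun _ => Iff.rfl),
    image_eq_univ_image_subtype fun _ => mem_compl]
  rfl

end ConfigMeasurable

end Configurations

section Measures

variable {α : Type*} [MeasurableSpace α]

theorem measurePreserving_prod_exchange {β : Type*} [MeasurableSpace β] (μ : Measure α)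
    (ν : Measure β) [SFinite μ] [SFinite ν] :
    MeasurePreserving (fun q : (α × β) × α => ((q.2, q.1.2), q.1.1))
      ((μ.prod ν).prod μ) ((μ.prod ν).prod μ) :=
  ((Measure.measurePreserving_swap (μ := ν) (ν := μ)).prod (MeasurePreserving.id μ)).comp
    (Measure.measurePreserving_swap.comp (measurePreserving_prodAssoc μ ν μ))

theorem Measure.pi_setOf_apply_eq_null {ι : Type*} [Fintype ι] [MeasurableEq α] (μ : Measure α)
    [SigmaFinite μ] [NullSingletonClass μ] {i j : ι} (hij : i ≠ j) :
    Measure.pi (fun _ : ι => μ) {x | x i = x j} = 0 := by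
  let p : ι → Prop := (· = j)
  let s : Set ((Subtype p → α) × ({k // ¬p k} → α)) := {q | q.2 ⟨i, hij⟩ = q.1 ⟨j, rfl⟩}
  have hs : MeasurableSet s := measurableSet_eq_fun (by fun_prop) (by fun_prop)
  have hpre : {x : ι → α | x i = x j} = MeasurableEquiv.piEquivPiSubtypeProd _ p ⁻¹' s := rfl
  rw [hpre, (measurePreserving_piEquivPiSubtypeProd _ p).measure_preimage hs.nullMeasurableSet,
    Measure.measure_prod_null hs]
  exact Filter.Eventually.of_forall fun y => Measure.pi_hyperplane _ _ _

theorem Measure.ae_injective_pi {ι : Type*} [Fintype ι] [MeasurableEq α] (μ : Measure α)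
    [SigmaFinite μ] [NullSingletonClass μ] :
    ∀ᵐ x ∂Measure.pi (fun _ : ι => μ), Injective x := by
  have hpairs : ∀ i j : ι, ∀ᵐ x ∂Measure.pi (fun _ : ι => μ), x i = x j → i = j := fun i j => by
    by_cases hij : i = j
    · exact Filter.Eventually.of_forall fun _ _ => hij
    · exact measure_mono_null (fun x hx => by simpa [hij] using hx) (pi_setOf_apply_eq_null μ hij)
  simpa only [Injective, ae_all_iff] using hpairs

variable [DecidableEq α] {F : Finset α → Finset α → Finset α → ℝ≥0∞}

theorem lintegral_prod_image_swap (μ : Measure α) [SigmaFinite μ] (hF : ConfigMeasurable F)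
    {ι κ : Type*} [Fintype ι] [DecidableEq ι] [Fintype κ] (J : Finset ι) (e : κ ≃ J) :
    ∫⁻ p, F (J.image p.1) (univ.image p.2) (Jᶜ.image p.1)
        ∂(Measure.pi fun _ : ι => μ).prod (Measure.pi fun _ : κ => μ) =
      ∫⁻ p, F (univ.image p.2) (J.image p.1) (Jᶜ.image p.1)
        ∂(Measure.pi fun _ : ι => μ).prod (Measure.pi fun _ : κ => μ) := by
  -- `Φ` splits `x` into its `J`- and `Jᶜ`-blocks and reindexes `η` by `J`; both integrands
  -- factor through `Φ`, and differ by the exchange of the two `J`-blocks.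
  let Φ : (ι → α) × (κ → α) → ((J → α) × ({i // i ∉ J} → α)) × (J → α) := fun p =>
    ((fun i => p.1 i, fun i => p.1 i), fun j => p.2 (e.symm j))
  have hΦ : MeasurePreserving Φ ((Measure.pi fun _ : ι => μ).prod (Measure.pi fun _ : κ => μ))
      (((Measure.pi fun _ : J => μ).prod (Measure.pi fun _ : {i // i ∉ J} => μ)).prod
        (Measure.pi fun _ : J => μ)) := by
    have hsplit := measurePreserving_piEquivPiSubtypeProd (fun _ : ι => μ) (· ∈ J)
    have hreindex := measurePreserving_arrowCongr' (fun _ : κ => μ) (fun _ : J => μ) e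
      (MeasurableEquiv.refl α) fun _ => MeasurePreserving.id μ
    convert hsplit.prod hreindex
    rfl
  let f : ((J → α) × ({i // i ∉ J} → α)) × (J → α) → ℝ≥0∞ := fun q =>
    F (univ.image q.1.1) (univ.image q.2) (univ.image q.1.2)
  have hf : Measurable f := (hF.measurable_of_fintype J J {i // i ∉ J}).comp
    (f := fun q : ((J → α) × ({i // i ∉ J} → α)) × (J → α) => (q.1.1, q.2, q.1.2)) (by fun_prop)
  have himage : ∀ p : (ι → α) × (κ → α), univ.image (Φ p).1.1 = J.image p.1 ∧
      univ.image (Φ p).1.2 = Jᶜ.image p.1 ∧ univ.image (Φ p).2 = univ.image p.2 := fun p =>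
    ⟨(image_eq_univ_image_subtype (fun _ => Iff.rfl) _).symm,
      (image_eq_univ_image_subtype (fun _ => mem_compl) _).symm,
      univ_image_comp_equiv p.2 e.symm⟩
  have hΦf : ∀ p, f (Φ p) = F (J.image p.1) (univ.image p.2) (Jᶜ.image p.1) := fun p => by
    simp only [f, himage]
  have hΦf' : ∀ p, f (((Φ p).2, (Φ p).1.2), (Φ p).1.1) =
      F (univ.image p.2) (J.image p.1) (Jᶜ.image p.1) := fun p => by
    simp only [f, himage]
  have hexch := measurePreserving_prod_exchange ((Measure.pi fun _ : J => μ))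
    (Measure.pi fun _ : {i // i ∉ J} => μ)
  simp only [← hΦf, ← hΦf']
  rw [hΦ.lintegral_comp hf, ← hexch.lintegral_comp hf]
  exact (hΦ.lintegral_comp (hf.comp hexch.measurable)).symm

theorem lintegral_sum_powerset_eq_sum_prod [MeasurableEq α] (μ : Measure α) [SigmaFinite μ]
    [NullSingletonClass μ] (hF : ConfigMeasurable F) {ι : Type*} [Fintype ι] [DecidableEq ι]
    (c : ℕ → ℝ≥0∞) :
    ∫⁻ x, ∑ ξ ∈ (univ.image x).powerset,
        c ξ.card * ∫⁻ η, F ξ (univ.image η) (univ.image x \ ξ) ∂(Measure.pi fun _ : Fin ξ.card => μ)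
      ∂(Measure.pi fun _ : ι => μ) =
    ∑ J ∈ univ.powerset, c J.card * ∫⁻ p, F (J.image p.1) (univ.image p.2) (Jᶜ.image p.1)
      ∂(Measure.pi fun _ : ι => μ).prod (Measure.pi fun _ : Fin J.card => μ) := by
  have hmeas := fun J : Finset ι => hF.measurable_image_compl J (Fin J.card)
  calc _ = ∫⁻ x, ∑ J ∈ univ.powerset, c J.card *
          ∫⁻ η, F (J.image x) (univ.image η) (Jᶜ.image x) ∂(Measure.pi fun _ : Fin J.card => μ)
        ∂(Measure.pi fun _ : ι => μ) := by
        refine lintegral_congr_ae ((Measure.ae_injective_pi μ).mono fun x hx => ?_)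
        beta_reduce
        rw [sum_powerset_univ_image hx fun ξ ζ =>
          c ξ.card * ∫⁻ η, F ξ (univ.image η) ζ ∂(Measure.pi fun _ : Fin ξ.card => μ)]
        refine sum_congr rfl fun J _ => ?_
        rw [card_image_of_injective J hx]
    _ = _ := by
        rw [lintegral_finsetSum _ fun J _ => (hmeas J).lintegral_prod_right'.const_mul _]
        refine sum_congr rfl fun J _ => ?_
        rw [lintegral_const_mul _ (hmeas J).lintegral_prod_right',
          lintegral_prod _ (hmeas J).aemeasurable]

theorem lintegral_sum_powerset_swap [MeasurableEq α] (μ : Measure α) [SigmaFinite μ]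
    [NullSingletonClass μ] (hF : ConfigMeasurable F) {ι : Type*} [Fintype ι] [DecidableEq ι]
    (c : ℕ → ℝ≥0∞) :
    ∫⁻ x, ∑ ξ ∈ (univ.image x).powerset,
        c ξ.card * ∫⁻ η, F ξ (univ.image η) (univ.image x \ ξ) ∂(Measure.pi fun _ : Fin ξ.card => μ)
      ∂(Measure.pi fun _ : ι => μ) =
    ∫⁻ x, ∑ ξ ∈ (univ.image x).powerset,
        c ξ.card * ∫⁻ η, F (univ.image η) ξ (univ.image x \ ξ) ∂(Measure.pi fun _ : Fin ξ.card => μ)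
      ∂(Measure.pi fun _ : ι => μ) :=
  (lintegral_sum_powerset_eq_sum_prod μ hF c).trans <|
    (sum_congr rfl fun J _ => congrArg _ (lintegral_prod_image_swap μ hF J J.equivFin.symm)).trans
      (lintegral_sum_powerset_eq_sum_prod μ hF.swap c).symm

end Measures

theorem lebesgue_poisson_symmetry_general {d : ℕ}
    (Λ : Set (EuclideanSpace ℝ (Fin d)))
    (F : Finset (EuclideanSpace ℝ (Fin d)) → Finset (EuclideanSpace ℝ (Fin d)) →
      Finset (EuclideanSpace ℝ (Fin d)) → ℝ≥0∞)
    (hF : ∀ n m k : ℕ, Measurable (fun p : (Fin n → EuclideanSpace ℝ (Fin d)) ×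
        (Fin m → EuclideanSpace ℝ (Fin d)) × (Fin k → EuclideanSpace ℝ (Fin d)) =>
      F (tupleSet p.1) (tupleSet p.2.1) (tupleSet p.2.2))) :
    lpInt Λ (fun X => ∑ ξ ∈ X.powerset, lpCond Λ ξ.card (fun η => F ξ η (X \ ξ))) =
      lpInt Λ (fun X => ∑ ξ ∈ X.powerset, lpCond Λ ξ.card (fun η => F η ξ (X \ ξ))) := by
  rcases subsingleton_or_nontrivial (EuclideanSpace ℝ (Fin d)) with _ | _
  · refine congrArg (lpInt Λ) (funext fun X => sum_congr rfl fun ξ _ => ?_)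
    simp only [lpCond, tupleSet, univ_image_eq_of_subsingleton]
  · simp only [lpInt, lpCond, Measure.restrict_pi_pi]
    exact tsum_congr fun n => congrArg _ (lintegral_sum_powerset_swap (volume.restrict Λ) hF
      fun k => (volume Λ ^ k)⁻¹)

/-- the symmetry property (3.2) of the Lebesgue–Poisson measure:
the expression `∫ L_Λ(dX) ∑_{ξ⊂X} ∫ L_{Λ|#ξ}(dη) F(ξ,η,X∖ξ)` is invariant
under exchanging the first two arguments of `F`. -/
theorem lebesgue_poisson_symmetry {d : ℕ}
    (Λ : Set (EuclideanSpace ℝ (Fin d))) (hΛ : MeasurableSet Λ)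
    (hb : Bornology.IsBounded Λ)
    (F : Finset (EuclideanSpace ℝ (Fin d)) → Finset (EuclideanSpace ℝ (Fin d)) →
      Finset (EuclideanSpace ℝ (Fin d)) → ℝ≥0∞)
    (hF : ∀ n m k : ℕ, Measurable (fun p : (Fin n → EuclideanSpace ℝ (Fin d)) ×
        (Fin m → EuclideanSpace ℝ (Fin d)) × (Fin k → EuclideanSpace ℝ (Fin d)) =>
      F (tupleSet p.1) (tupleSet p.2.1) (tupleSet p.2.2))) :
    lpInt Λ (fun X => ∑ ξ ∈ X.powerset, lpCond Λ ξ.card (fun η => F ξ η (X \ ξ))) =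
      lpInt Λ (fun X => ∑ ξ ∈ X.powerset, lpCond Λ ξ.card (fun η => F η ξ (X \ ξ))) :=
  lebesgue_poisson_symmetry_general Λ F hF

end
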